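/- arXiv:2510.23973 — 6 statements merged into one kernel-verified Lean document; each statement's English description precedes it below -/
import Mathlib

section
/- Let V be a finite-dimensional real normed vector space and A a linear endomorphism of V all of whose complex eigenvalues are real (equivalently, V is the direct sum of the generalized eigenspaces of A over ℝ). Let β : ℝ → V be a continuous curve satisfying β(t+s) = β(t) + e^{tA} β(s) for all t, s ∈ ℝ. If there exists a sequence t_k → +∞ (respectively t_k → −∞) such that the sequence (β(t_k)) is bounded, then β(t) lies in V⁻ (respectively V⁺) for every t ∈ ℝ, where V⁻ (respectively V⁺) denotes the sum of the generalized eigenspaces of A for negative (respectively positive) eigenvalues. In particular, in the first case the set {β(t) : t ≥ 0} is bounded. -/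
/-!
Fix `μ ≥ 0` and project `β` onto the generalized eigenspace `E_μ` along the other ones. The
projection commutes with `e^{tA}`, so the projected curve `γ` is again a cocycle, and the cocycle
identity `e^{(t_k - t)A} γ(t) = γ(t_k) - γ(-t) - e^{-tA} γ(t_k)` shows that every orbit of `γ(t)`
is bounded along `t_k - t → ∞`. On `E_μ` the orbit of `x` is `e^{sμ}` times a polynomial in `s`
whose leading coefficient is `(A - μ)^m x / m!`; boundedness kills these coefficients down to
`(A - μ) x` (and also `x` itself when `μ > 0`), so `γ` takes values in `ker A`. There the
cocycle is just an additive continuous map, i.e. `γ(t) = t γ(1)`, and boundedness along `t_k`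
gives `γ = 0`. Hence `β(t) ∈ V⁻`.

On `V⁻` the terms of `β(n) = ∑_{j<n} e^{jA} β(1)` decay geometrically, which bounds `β` on
`[0, ∞)`. The case `t_k → -∞` is the case `t_k → +∞` for `t ↦ β(-t)`, a cocycle for `-A`.
-/

open Filter Bornology NormedSpace Topology

theorem iSupIndep.isCompl_iSup_ne {α ι : Type*} [CompleteLattice α] {t : ι → α}
    (ht : iSupIndep t) (htop : ⨆ i, t i = ⊤) (i : ι) :
    IsCompl (t i) (⨆ j, ⨆ _ : j ≠ i, t j) :=
  ⟨ht i, codisjoint_iff.2 ((iSup_split_single t i).symm.trans htop)⟩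

theorem iSupIndep.mem_iSup_of_forall_mem_iSup_ne {ι R M : Type*} [Ring R] [AddCommGroup M]
    [Module R M] {E : ι → Submodule R M} (hE : iSupIndep E) (htop : ⨆ i, E i = ⊤)
    {p : ι → Prop} {x : M} (hx : ∀ i, ¬ p i → x ∈ ⨆ j, ⨆ _ : j ≠ i, E j) :
    x ∈ ⨆ i, ⨆ _ : p i, E i := by
  obtain ⟨f, hfE, rfl⟩ :=
    (Submodule.mem_iSup_iff_exists_finsupp E x).1 (htop ▸ Submodule.mem_top)
  refine Submodule.sum_mem _ fun i _ => ?_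
  by_cases hi : p i
  · exact Submodule.mem_iSup_of_mem i (Submodule.mem_iSup_of_mem hi (hfE i))
  suffices f i = 0 by simp [this]
  have hrest : (f.erase i).sum (fun _ y => y) ∈ ⨆ j, ⨆ _ : j ≠ i, E j := by
    refine Submodule.sum_mem _ fun j hj => ?_
    have hji : j ≠ i := fun h => by simp [h] at hj
    exact Submodule.mem_iSup_of_mem j (Submodule.mem_iSup_of_mem hji (by
      rw [Finsupp.erase_ne hji]; exact hfE j))
  have hsplit : f.sum (fun _ y => y) = f i + (f.erase i).sum (fun _ y => y) := by
    conv_lhs => rw [← Finsupp.single_add_erase i f]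
    rw [Finsupp.sum_add_index' (fun _ => rfl) (fun _ _ _ => rfl), Finsupp.sum_single_index rfl]
  refine (Submodule.disjoint_def.1 (hE i)) _ (hfE i) ?_
  simpa [hsplit] using Submodule.sub_mem _ (hx i hi) hrest

namespace Module.End

variable {R M : Type*} [CommRing R] [AddCommGroup M] [Module R M]

theorem maxGenEigenspace_neg (f : End R M) (μ : R) :
    (-f).maxGenEigenspace μ = f.maxGenEigenspace (-μ) := by
  ext x
  simp only [mem_maxGenEigenspace]
  refine exists_congr fun k => ?_
  rw [show -f - μ • 1 = -(f - (-μ) • 1) by rw [neg_smul, sub_neg_eq_add, neg_add']]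
  rcases Nat.even_or_odd k with hk | hk
  · rw [hk.neg_pow]
  · rw [hk.neg_pow, LinearMap.neg_apply, neg_eq_zero]

theorem iSup_maxGenEigenspace_neg (f : End R M) (p : R → Prop) :
    ⨆ μ, ⨆ _ : p μ, (-f).maxGenEigenspace μ = ⨆ μ, ⨆ _ : p (-μ), f.maxGenEigenspace μ := by
  rw [← (Equiv.neg R).iSup_comp (g := fun μ => ⨆ _ : p (-μ), f.maxGenEigenspace μ)]
  simp [maxGenEigenspace_neg]

end Module.End

theorem ContinuousLinearMap.exists_commute_projection_of_isCompl {𝕜 E : Type*}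
    [NontriviallyNormedField 𝕜] [CompleteSpace 𝕜] [NormedAddCommGroup E] [NormedSpace 𝕜 E]
    [FiniteDimensional 𝕜 E] (A : E →L[𝕜] E) {p q : Submodule 𝕜 E} (hpq : IsCompl p q)
    (hp : p ∈ Module.End.invtSubmodule (A : E →ₗ[𝕜] E))
    (hq : q ∈ Module.End.invtSubmodule (A : E →ₗ[𝕜] E)) :
    ∃ P : E →L[𝕜] E, Commute P A ∧ (∀ x, P x ∈ p) ∧ ∀ x, P x = 0 ↔ x ∈ q := by
  let P := LinearMap.toContinuousLinearMap (p.projection q hpq)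
  have hP : IsIdempotentElem P := ContinuousLinearMap.isIdempotentElem_toLinearMap_iff.1
    (Submodule.isIdempotentElem_projection hpq)
  refine ⟨P, ?_, Submodule.projection_apply_mem hpq,
    fun x => Submodule.projection_apply_eq_zero_iff hpq⟩
  rw [ContinuousLinearMap.IsIdempotentElem.commute_iff hP]
  simpa [P] using ⟨hp, hq⟩

theorem Real.tendsto_exp_mul_mul_pow_atTop {μ : ℝ} {m : ℕ} (hμ : 0 ≤ μ) (h : 0 < μ ∨ m ≠ 0) :
    Tendsto (fun s => exp (s * μ) * s ^ m) atTop atTop := by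
  rcases h with hμ | hm
  · refine tendsto_atTop_mono' _ ?_ (tendsto_exp_atTop.comp (tendsto_id.atTop_mul_const hμ))
    filter_upwards [eventually_ge_atTop 1] with s hs
    exact le_mul_of_one_le_right (exp_pos _).le (one_le_pow₀ hs)
  · refine tendsto_atTop_mono' _ ?_ (tendsto_pow_atTop hm)
    filter_upwards [eventually_ge_atTop 0] with s hs
    exact le_mul_of_one_le_left (pow_nonneg hs _) (one_le_exp (mul_nonneg hs hμ))

section

variable {V : Type*} [NormedAddCommGroup V] [NormedSpace ℝ V]

theorem tendsto_inv_smul_nhds_zero_of_isBounded {ι : Type*} {l : Filter ι} {r : ι → ℝ}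
    {f : ι → V} (hr : Tendsto r l atTop) (hf : IsBounded (Set.range f)) :
    Tendsto (fun i => (r i)⁻¹ • f i) l (𝓝 0) := by
  obtain ⟨C, hC⟩ := isBounded_iff_forall_norm_le.1 hf
  exact (tendsto_inv_atTop_zero.comp hr).zero_smul_isBoundedUnder_le
    (isBoundedUnder_of ⟨C, fun i => hC _ (Set.mem_range_self i)⟩)

namespace ContinuousLinearMap

variable (A : V →L[ℝ] V)

theorem mem_maxGenEigenspace_iff {μ : ℝ} {x : V} :
    x ∈ Module.End.maxGenEigenspace (A : V →ₗ[ℝ] V) μ ↔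
      ∃ k, ((A - μ • (1 : V →L[ℝ] V)) ^ k) x = 0 := by
  refine (Module.End.mem_maxGenEigenspace _ _ _).trans (exists_congr fun k => ?_)
  rw [← coe_coe, toLinearMap_pow, toLinearMap_sub, toLinearMap_smul, toLinearMap_one]

theorem exists_commute_projection_maxGenEigenspace [FiniteDimensional ℝ V]
    (hA : ⨆ μ, Module.End.maxGenEigenspace (A : V →ₗ[ℝ] V) μ = ⊤) (μ : ℝ) :
    ∃ P : V →L[ℝ] V, Commute P A ∧
      (∀ x, P x ∈ Module.End.maxGenEigenspace (A : V →ₗ[ℝ] V) μ) ∧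
      ∀ x, P x = 0 ↔ x ∈ ⨆ ν, ⨆ _ : ν ≠ μ, Module.End.maxGenEigenspace (A : V →ₗ[ℝ] V) ν := by
  have hinv : ∀ ν, Module.End.maxGenEigenspace (A : V →ₗ[ℝ] V) ν ∈
      Module.End.invtSubmodule (A : V →ₗ[ℝ] V) := fun ν =>
    Module.End.mapsTo_maxGenEigenspace_of_comm (Commute.refl _) ν
  refine A.exists_commute_projection_of_isCompl
    ((Module.End.independent_maxGenEigenspace _).isCompl_iSup_ne hA μ) (hinv μ) ?_
  exact iSup₂_le fun ν hν => (hinv ν).trans (Submodule.comap_mono (le_iSup₂_of_le ν hν le_rfl))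

variable [CompleteSpace V]

theorem exp_smul_apply_of_pow_sub_smul_apply_eq_zero {μ : ℝ} {k : ℕ} {x : V}
    (hx : ((A - μ • 1) ^ k) x = 0) (s : ℝ) :
    exp (s • A) x = Real.exp (s * μ) •
      ∑ j ∈ Finset.range k, (s ^ j / j.factorial) • ((A - μ • 1) ^ j) x := by
  let +nondep : NormedAlgebra ℚ (V →L[ℝ] V) := .restrictScalars ℚ ℝ _
  set N := A - μ • (1 : V →L[ℝ] V)
  have hsplit : s • A = algebraMap ℝ _ (s * μ) + s • N := by
    simp [N, Algebra.algebraMap_eq_smul_one, smul_sub, smul_smul]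
  have hscalar : exp (algebraMap ℝ (V →L[ℝ] V) (s * μ)) = Real.exp (s * μ) • 1 := by
    rw [← algebraMap_exp_comm, Real.exp_eq_exp_ℝ, Algebra.algebraMap_eq_smul_one]
  have hnil : exp (s • N) x = ∑ j ∈ Finset.range k, (s ^ j / j.factorial) • (N ^ j) x := by
    refine ((exp_series_hasSum_exp' (𝕂 := ℝ) (s • N)).mapL (apply ℝ V x)).unique
      (hasSum_sum_of_ne_finset_zero fun j hj => ?_) |>.trans
      (Finset.sum_congr rfl fun j _ => ?_)
    · obtain ⟨d, rfl⟩ := Nat.exists_eq_add_of_le' (not_lt.1 (Finset.mem_range.not.1 hj))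
      rw [apply_apply, smul_pow, smul_apply, smul_apply, pow_add N, mul_apply_eq_comp, hx,
        map_zero, smul_zero, smul_zero]
    · simp [smul_pow, smul_smul, div_eq_inv_mul, mul_comm]
  rw [hsplit, exp_add_of_commute (Algebra.commutes _ _), hscalar, mul_apply_eq_comp, hnil,
    smul_apply, one_apply_eq_self]

theorem tendsto_inv_smul_exp_smul_apply {μ : ℝ} {m : ℕ} {x : V}
    (hx : ((A - μ • 1) ^ (m + 1)) x = 0) :
    Tendsto (fun s : ℝ => (Real.exp (s * μ) * s ^ m)⁻¹ • exp (s • A) x) atTop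
      (𝓝 ((m.factorial : ℝ)⁻¹ • ((A - μ • 1) ^ m) x)) := by
  set N := A - μ • (1 : V →L[ℝ] V)
  have hexpand : ∀ s : ℝ, (Real.exp (s * μ) * s ^ m)⁻¹ • exp (s • A) x =
      ∑ j ∈ Finset.range (m + 1), (s ^ j / s ^ m / j.factorial) • (N ^ j) x := by
    intro s
    rw [exp_smul_apply_of_pow_sub_smul_apply_eq_zero A hx, smul_smul, mul_inv_rev, mul_assoc,
      inv_mul_cancel₀ (Real.exp_pos _).ne', mul_one, Finset.smul_sum]
    exact Finset.sum_congr rfl fun j _ => by rw [smul_smul]; congr 1; ring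
  have hlower : Tendsto
      (fun s : ℝ => ∑ j ∈ Finset.range m, (s ^ j / s ^ m / j.factorial) • (N ^ j) x)
      atTop (𝓝 0) := by
    simpa only [zero_div, zero_smul, Finset.sum_const_zero] using
      tendsto_finsetSum (Finset.range m) fun j hj =>
        ((tendsto_pow_div_pow_atTop_zero (Finset.mem_range.1 hj)).div_const
          (j.factorial : ℝ)).smul_const ((N ^ j) x)
  have hleading : Tendsto (fun s : ℝ => (s ^ m / s ^ m / m.factorial) • (N ^ m) x) atTop
      (𝓝 ((m.factorial : ℝ)⁻¹ • (N ^ m) x)) := by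
    refine tendsto_const_nhds.congr' ?_
    filter_upwards [eventually_gt_atTop 0] with s hs
    rw [div_self (pow_pos hs m).ne', one_div]
  simpa only [hexpand, Finset.sum_range_succ, zero_add] using hlower.add hleading

theorem pow_sub_smul_apply_eq_zero_of_isBounded {μ : ℝ} {m : ℕ} {x : V}
    (hx : ((A - μ • 1) ^ (m + 1)) x = 0)
    (hgrowth : Tendsto (fun s => Real.exp (s * μ) * s ^ m) atTop atTop)
    {s : ℕ → ℝ} (hs : Tendsto s atTop atTop)
    (hbdd : IsBounded (Set.range fun n => exp (s n • A) x)) :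
    ((A - μ • 1) ^ m) x = 0 := by
  have h := tendsto_nhds_unique ((tendsto_inv_smul_exp_smul_apply A hx).comp hs)
    (tendsto_inv_smul_nhds_zero_of_isBounded (hgrowth.comp hs) hbdd)
  simpa [Nat.factorial_ne_zero] using h

theorem pow_sub_smul_apply_eq_zero_of_mem_maxGenEigenspace_of_isBounded {μ : ℝ} {x : V}
    (hx : x ∈ Module.End.maxGenEigenspace (A : V →ₗ[ℝ] V) μ) {m₀ : ℕ}
    (hgrowth : ∀ m ≥ m₀, Tendsto (fun s => Real.exp (s * μ) * s ^ m) atTop atTop)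
    {s : ℕ → ℝ} (hs : Tendsto s atTop atTop)
    (hbdd : IsBounded (Set.range fun n => exp (s n • A) x)) :
    ((A - μ • 1) ^ m₀) x = 0 := by
  obtain ⟨k, hk⟩ := (mem_maxGenEigenspace_iff A).1 hx
  refine Nat.decreasingInduction' (P := fun m => ((A - μ • 1) ^ m) x = 0)
    (fun m _ hm hsucc => pow_sub_smul_apply_eq_zero_of_isBounded A hsucc (hgrowth m hm) hs hbdd)
    (Nat.le_add_right m₀ k) ?_
  rw [pow_add, mul_apply_eq_comp, hk, map_zero]

theorem apply_eq_zero_of_mem_maxGenEigenspace_of_isBounded {μ : ℝ} (hμ : 0 ≤ μ) {x : V}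
    (hx : x ∈ Module.End.maxGenEigenspace (A : V →ₗ[ℝ] V) μ)
    {s : ℕ → ℝ} (hs : Tendsto s atTop atTop)
    (hbdd : IsBounded (Set.range fun n => exp (s n • A) x)) :
    A x = 0 := by
  rcases hμ.eq_or_lt with rfl | hμ
  · simpa using pow_sub_smul_apply_eq_zero_of_mem_maxGenEigenspace_of_isBounded A hx (m₀ := 1)
      (fun m hm => Real.tendsto_exp_mul_mul_pow_atTop le_rfl (Or.inr (by omega))) hs hbdd
  · have hx0 : x = 0 := by
      simpa using pow_sub_smul_apply_eq_zero_of_mem_maxGenEigenspace_of_isBounded A hx (m₀ := 0)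
        (fun m _ => Real.tendsto_exp_mul_mul_pow_atTop hμ.le (Or.inl hμ)) hs hbdd
    rw [hx0, map_zero]

theorem summable_norm_exp_nat_smul_apply_of_mem_maxGenEigenspace {μ : ℝ} (hμ : μ < 0) {x : V}
    (hx : x ∈ Module.End.maxGenEigenspace (A : V →ₗ[ℝ] V) μ) :
    Summable fun n : ℕ => ‖exp ((n : ℝ) • A) x‖ := by
  obtain ⟨k, hk⟩ := (mem_maxGenEigenspace_iff A).1 hx
  set N := A - μ • (1 : V →L[ℝ] V)
  have hr : ‖Real.exp μ‖ < 1 := by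
    rwa [Real.norm_eq_abs, abs_of_pos (Real.exp_pos μ), Real.exp_lt_one_iff]
  refine Summable.of_nonneg_of_le (fun n => norm_nonneg _) (fun n => ?_)
    (summable_sum (s := Finset.range k) fun j _ =>
      (summable_pow_mul_geometric_of_norm_lt_one j hr).mul_right (‖(N ^ j) x‖ / j.factorial))
  rw [exp_smul_apply_of_pow_sub_smul_apply_eq_zero A hk, norm_smul,
    Real.norm_of_nonneg (Real.exp_pos _).le, Real.exp_nat_mul]
  refine (mul_le_mul_of_nonneg_left (norm_sum_le _ _) (by positivity)).trans_eq ?_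
  rw [Finset.mul_sum]
  refine Finset.sum_congr rfl fun j _ => ?_
  rw [norm_smul, Real.norm_of_nonneg (by positivity)]
  ring

theorem summable_norm_exp_nat_smul_apply {x : V}
    (hx : x ∈ ⨆ μ : ℝ, ⨆ _ : μ < 0, Module.End.maxGenEigenspace (A : V →ₗ[ℝ] V) μ) :
    Summable fun n : ℕ => ‖exp ((n : ℝ) • A) x‖ := by
  rw [iSup_subtype'] at hx
  refine Submodule.iSup_induction _
    (motive := fun y => Summable fun n : ℕ => ‖exp ((n : ℝ) • A) y‖) hx
    (fun μ y hy => A.summable_norm_exp_nat_smul_apply_of_mem_maxGenEigenspace μ.2 hy)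
    (by simp) fun y z hy hz => ?_
  refine (hy.add hz).of_nonneg_of_le (fun n => norm_nonneg _) fun n => ?_
  rw [map_add]
  exact norm_add_le _ _

end ContinuousLinearMap

def IsExpCocycle (A : V →L[ℝ] V) (β : ℝ → V) : Prop :=
  ∀ t s, β (t + s) = β t + exp (t • A) (β s)

namespace IsExpCocycle

variable {A : V →L[ℝ] V} {β : ℝ → V}

theorem map_zero (hβ : IsExpCocycle A β) : β 0 = 0 := by
  simpa using hβ 0 0

theorem map_natCast (hβ : IsExpCocycle A β) (n : ℕ) :
    β n = ∑ j ∈ Finset.range n, exp ((j : ℝ) • A) (β 1) := by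
  induction n with
  | zero => simpa using hβ.map_zero
  | succ n ih => rw [Nat.cast_succ, hβ, ih, Finset.sum_range_succ]

theorem comp_neg (hβ : IsExpCocycle A β) : IsExpCocycle (-A) fun u => β (-u) := by
  intro t s
  simp only [neg_add, hβ (-t) (-s), smul_neg, neg_smul]

theorem clm_comp (hβ : IsExpCocycle A β) {P : V →L[ℝ] V} (hP : Commute P A) :
    IsExpCocycle A fun t => P (β t) := by
  intro t s
  simp only [hβ t s, map_add]
  rw [← mul_apply_eq_comp, ((hP.smul_right t).exp_right).eq, mul_apply_eq_comp]

theorem isBounded_range_exp_smul_apply (hβ : IsExpCocycle A β) {τ : ℕ → ℝ}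
    (hbdd : IsBounded (Set.range fun n => β (τ n))) (t : ℝ) :
    IsBounded (Set.range fun n => exp ((τ n - t) • A) (β t)) := by
  have hrepr : ∀ n, exp ((τ n - t) • A) (β t) =
      β (τ n) - β (-t) - exp ((-t) • A) (β (τ n)) := by
    intro n
    have h₁ := hβ (τ n - t) t
    have h₂ := hβ (-t) (τ n)
    rw [sub_add_cancel] at h₁
    rw [neg_add_eq_sub] at h₂
    rw [sub_sub, ← h₂]
    exact eq_sub_of_add_eq' h₁.symm
  obtain ⟨C, hC⟩ := isBounded_iff_forall_norm_le.1 hbdd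
  refine isBounded_iff_forall_norm_le.2 ⟨C + ‖β (-t)‖ + ‖exp ((-t) • A)‖ * C, ?_⟩
  rintro _ ⟨n, rfl⟩
  have hn := hC _ (Set.mem_range_self n)
  dsimp only
  rw [hrepr n]
  calc _ ≤ ‖β (τ n)‖ + ‖β (-t)‖ + ‖exp ((-t) • A) (β (τ n))‖ :=
        (norm_sub_le _ _).trans (add_le_add_left (norm_sub_le _ _) _)
    _ ≤ _ := by gcongr; exact (ContinuousLinearMap.le_opNorm _ _).trans (by gcongr)

variable [CompleteSpace V]

theorem map_add_of_forall_apply_eq_zero (hβ : IsExpCocycle A β) (hker : ∀ t, A (β t) = 0)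
    (t s : ℝ) : β (t + s) = β t + β s := by
  have hfix : ((A - (0 : ℝ) • (1 : V →L[ℝ] V)) ^ 1) (β s) = 0 := by simpa using hker s
  have hexp : exp (t • A) (β s) = β s := by
    simpa using A.exp_smul_apply_of_pow_sub_smul_apply_eq_zero hfix t
  rw [hβ t s, hexp]

theorem eq_zero_of_forall_apply_eq_zero (hβ : IsExpCocycle A β) (hcont : Continuous β)
    (hker : ∀ t, A (β t) = 0) {τ : ℕ → ℝ} (hτ : Tendsto τ atTop atTop)
    (hbdd : IsBounded (Set.range fun n => β (τ n))) (t : ℝ) : β t = 0 := by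
  let F : ℝ →+ V := AddMonoidHom.mk' β (hβ.map_add_of_forall_apply_eq_zero hker)
  have hlin : ∀ t, β t = t • β 1 := fun t => by
    simpa [F] using map_real_smul F hcont t 1
  have hβ1 : β 1 = 0 := by
    refine tendsto_nhds_unique (tendsto_const_nhds.congr' ?_)
      (tendsto_inv_smul_nhds_zero_of_isBounded hτ hbdd)
    filter_upwards [hτ.eventually_gt_atTop 0] with n hn
    rw [hlin (τ n), inv_smul_smul₀ hn.ne']
  rw [hlin t, hβ1, smul_zero]

theorem isBounded_image_Ici (hβ : IsExpCocycle A β) (hcont : Continuous β)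
    (hsum : Summable fun n : ℕ => ‖exp ((n : ℝ) • A) (β 1)‖) :
    IsBounded (β '' Set.Ici 0) := by
  let +nondep : NormedAlgebra ℚ (V →L[ℝ] V) := .restrictScalars ℚ ℝ _
  have hnat : ∀ n : ℕ, ‖β n‖ ≤ ∑' j : ℕ, ‖exp ((j : ℝ) • A) (β 1)‖ := fun n => by
    rw [hβ.map_natCast]
    exact (norm_sum_le _ _).trans (hsum.sum_le_tsum _ fun j _ => norm_nonneg _)
  obtain ⟨M, hM⟩ := (isCompact_Icc (a := (0 : ℝ)) (b := 1)).exists_bound_of_continuousOn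
    hcont.continuousOn
  obtain ⟨K, hK⟩ := (isCompact_Icc (a := (0 : ℝ)) (b := 1)).exists_bound_of_continuousOn
    (f := fun s : ℝ => exp (s • A))
    (exp_continuous.comp (continuous_id.smul continuous_const)).continuousOn
  have hK0 : 0 ≤ K := (norm_nonneg _).trans (hK 0 ⟨le_rfl, zero_le_one⟩)
  refine isBounded_iff_forall_norm_le.2 ⟨M + K * ∑' j : ℕ, ‖exp ((j : ℝ) • A) (β 1)‖, ?_⟩
  rintro _ ⟨t, ht, rfl⟩
  have hfrac : t - ⌊t⌋₊ ∈ Set.Icc (0 : ℝ) 1 :=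
    ⟨sub_nonneg.2 (Nat.floor_le ht), by linarith [Nat.lt_floor_add_one t]⟩
  rw [← sub_add_cancel t ⌊t⌋₊, hβ]
  refine (norm_add_le _ _).trans (add_le_add (hM _ hfrac) ?_)
  exact (ContinuousLinearMap.le_opNorm _ _).trans
    (mul_le_mul (hK _ hfrac) (hnat _) (norm_nonneg _) hK0)

end IsExpCocycle

theorem IsExpCocycle.mem_iSup_maxGenEigenspace_neg [FiniteDimensional ℝ V] {A : V →L[ℝ] V}
    {β : ℝ → V} (hA : ⨆ μ, Module.End.maxGenEigenspace (A : V →ₗ[ℝ] V) μ = ⊤)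
    (hβ : IsExpCocycle A β) (hcont : Continuous β) {τ : ℕ → ℝ} (hτ : Tendsto τ atTop atTop)
    (hbdd : IsBounded (Set.range fun n => β (τ n))) (t : ℝ) :
    β t ∈ ⨆ μ : ℝ, ⨆ _ : μ < 0, Module.End.maxGenEigenspace (A : V →ₗ[ℝ] V) μ := by
  refine (Module.End.independent_maxGenEigenspace _).mem_iSup_of_forall_mem_iSup_ne hA
    fun μ hμ => ?_
  obtain ⟨P, hPA, hPmem, hPker⟩ := A.exists_commute_projection_maxGenEigenspace hA μ
  have hPβ : IsExpCocycle A fun t => P (β t) := hβ.clm_comp hPA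
  have hPbdd : IsBounded (Set.range fun n => P (β (τ n))) := by
    simpa only [← Set.range_comp'] using P.lipschitz.isBounded_image hbdd
  have hker : ∀ t, A (P (β t)) = 0 := fun t =>
    A.apply_eq_zero_of_mem_maxGenEigenspace_of_isBounded (not_lt.1 hμ) (hPmem _)
      (tendsto_atTop_add_const_right _ (-t) hτ) (hPβ.isBounded_range_exp_smul_apply hPbdd t)
  exact (hPker _).1
    (hPβ.eq_zero_of_forall_apply_eq_zero (P.continuous.comp hcont) hker hτ hPbdd t)

end

/-- Let `V` be a finite-dimensional real normed vector space and `A` a linear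
endomorphism of `V` all of whose complex eigenvalues are real (i.e. `V` is the sum of the real
generalized eigenspaces of `A`).  If a continuous curve `β : ℝ → V` satisfies the cocycle
property `β (t+s) = β t + e^{tA} (β s)` and is bounded along a sequence `t_k → +∞`
(resp. `t_k → -∞`), then `β t` lies in `V⁻` (resp. `V⁺`) for every `t`; in the first case the
set `{β t : t ≥ 0}` is bounded. -/
theorem curve_cocycle_bounded_mem_stable
    {V : Type*} [NormedAddCommGroup V] [NormedSpace ℝ V] [FiniteDimensional ℝ V]
    (A : V →L[ℝ] V)
    (hA : (⨆ μ : ℝ, Module.End.maxGenEigenspace (A : V →ₗ[ℝ] V) μ) = ⊤)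
    (β : ℝ → V) (hβ : Continuous β)
    (hcoc : ∀ t s : ℝ, β (t + s) = β t + exp (t • A) (β s)) :
    ((∃ t : ℕ → ℝ, Tendsto t atTop atTop ∧ IsBounded (Set.range fun k => β (t k))) →
      (∀ t : ℝ,
        β t ∈ ⨆ μ : ℝ, ⨆ _ : μ < 0, Module.End.maxGenEigenspace (A : V →ₗ[ℝ] V) μ) ∧
      IsBounded (β '' Set.Ici (0 : ℝ))) ∧
    ((∃ t : ℕ → ℝ, Tendsto t atTop atBot ∧ IsBounded (Set.range fun k => β (t k))) →
      ∀ t : ℝ,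
        β t ∈ ⨆ μ : ℝ, ⨆ _ : 0 < μ, Module.End.maxGenEigenspace (A : V →ₗ[ℝ] V) μ) := by
  have hcoc : IsExpCocycle A β := hcoc
  refine ⟨fun ⟨τ, hτ, hbdd⟩ => ?_, fun ⟨τ, hτ, hbdd⟩ t => ?_⟩
  · have hneg := hcoc.mem_iSup_maxGenEigenspace_neg hA hβ hτ hbdd
    exact ⟨hneg, hcoc.isBounded_image_Ici hβ (A.summable_norm_exp_nat_smul_apply (hneg 1))⟩
  · have hA' : ⨆ μ, Module.End.maxGenEigenspace ((-A : V →L[ℝ] V) : V →ₗ[ℝ] V) μ = ⊤ := by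
      simpa [hA] using Module.End.iSup_maxGenEigenspace_neg (A : V →ₗ[ℝ] V) fun _ => True
    have h := hcoc.comp_neg.mem_iSup_maxGenEigenspace_neg hA' (hβ.comp continuous_neg)
      (tendsto_neg_atBot_atTop.comp hτ) (by simpa using hbdd) (-t)
    simpa [Module.End.iSup_maxGenEigenspace_neg] using h
end

section
/- Let V be a finite-dimensional real normed vector space and N a nilpotent linear endomorphism of V. Let β : ℝ → V be a continuous curve satisfying β(t+s) = β(t) + e^{tN} β(s) for all t, s ∈ ℝ. If there exists a sequence t_k → +∞ such that the sequence (β(t_k)) is bounded, then β(t) = 0 for all t ∈ ℝ. -/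
/-!
Descending induction on `j` shows `N ^ j ∘ β = 0`, starting from `N ^ n = 0`. Once
`N ^ (j + 1) ∘ β = 0`, the vectors `N ^ j (β s)` lie in `ker N`, where every `e^{tN}` acts as the
identity; so the cocycle identity makes `N ^ j ∘ β` additive, hence (being continuous)
`t ↦ t • N ^ j (β 1)`. A linear function bounded along `t_k → +∞` vanishes.
-/

open Filter Bornology NormedSpace

theorem ContinuousLinearMap.exp_apply_eq_self_of_apply_eq_zero {𝕜 E : Type*} [RCLike 𝕜]
    [NormedAddCommGroup E] [NormedSpace 𝕜 E] [CompleteSpace E] {A : E →L[𝕜] E} {w : E}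
    (hw : A w = 0) : exp A w = w := by
  have hsum := (exp_series_hasSum_exp' (𝕂 := 𝕜) A).mapL (ContinuousLinearMap.apply 𝕜 E w)
  refine hsum.unique (hasSum_single 0 fun n hn => ?_) |>.trans (by simp)
  obtain ⟨m, rfl⟩ := Nat.exists_eq_succ_of_ne_zero hn
  simp [pow_succ, hw]

theorem eq_zero_of_isBounded_range_smul {ι E : Type*} [NormedAddCommGroup E] [NormedSpace ℝ E]
    {l : Filter ι} [l.NeBot] {t : ι → ℝ} (ht : Tendsto t l atTop) {v : E}
    (hv : IsBounded (Set.range fun k => t k • v)) : v = 0 := by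
  by_contra hv0
  obtain ⟨C, hC⟩ := isBounded_iff_forall_norm_le.1 hv
  have hnorm : Tendsto (fun k => ‖t k • v‖) l atTop := by
    simp_rw [norm_smul, Real.norm_eq_abs]
    exact (tendsto_abs_atTop_atTop.comp ht).atTop_mul_const (norm_pos_iff.2 hv0)
  obtain ⟨k, hk⟩ := (hnorm.eventually_gt_atTop C).exists
  exact hk.not_ge (hC _ ⟨k, rfl⟩)

section Cocycle

variable {V : Type*} [NormedAddCommGroup V] [NormedSpace ℝ V] [CompleteSpace V]
  {N : V →L[ℝ] V} {β : ℝ → V}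

theorem pow_apply_cocycle_add {j : ℕ} (hcoc : ∀ t s : ℝ, β (t + s) = β t + exp (t • N) (β s))
    (hj : ∀ s, (N ^ (j + 1)) (β s) = 0) (t s : ℝ) :
    (N ^ j) (β (t + s)) = (N ^ j) (β t) + (N ^ j) (β s) := by
  have hcomm : Commute (exp (t • N)) (N ^ j) :=
    (((Commute.refl N).smul_left t).pow_right j).exp_left
  have hker : (t • N) ((N ^ j) (β s)) = 0 := by
    rw [smul_apply, ← mul_apply_eq_comp, ← pow_succ', hj,
      smul_zero]
  rw [hcoc, map_add, ← mul_apply_eq_comp, ← hcomm.eq,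
    mul_apply_eq_comp, ContinuousLinearMap.exp_apply_eq_self_of_apply_eq_zero hker]

theorem pow_apply_cocycle_eq_smul {j : ℕ} (hβ : Continuous β)
    (hcoc : ∀ t s : ℝ, β (t + s) = β t + exp (t • N) (β s))
    (hj : ∀ s, (N ^ (j + 1)) (β s) = 0) (t : ℝ) :
    (N ^ j) (β t) = t • (N ^ j) (β 1) := by
  let g : ℝ →+ V := AddMonoidHom.mk' (fun t => (N ^ j) (β t)) (pow_apply_cocycle_add hcoc hj)
  simpa [g] using map_real_smul g ((N ^ j).continuous.comp hβ) t 1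

theorem pow_apply_cocycle_eq_zero_of_succ {j : ℕ} (hβ : Continuous β)
    (hcoc : ∀ t s : ℝ, β (t + s) = β t + exp (t • N) (β s))
    (hbd : ∃ t : ℕ → ℝ, Tendsto t atTop atTop ∧ IsBounded (Set.range fun k => β (t k)))
    (hj : ∀ s, (N ^ (j + 1)) (β s) = 0) (t : ℝ) :
    (N ^ j) (β t) = 0 := by
  obtain ⟨τ, hτ, hbdd⟩ := hbd
  have hlin := pow_apply_cocycle_eq_smul hβ hcoc hj
  have hone : (N ^ j) (β 1) = 0 := by
    refine eq_zero_of_isBounded_range_smul hτ ?_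
    have himage := (N ^ j).lipschitz.isBounded_image hbdd
    rw [← Set.range_comp, Function.comp_def] at himage
    rwa [funext fun k => hlin (τ k)] at himage
  rw [hlin, hone, smul_zero]

end Cocycle

/-- Let `V` be a finite-dimensional real normed vector space and `N` a nilpotent
linear endomorphism of `V`.  If a continuous curve `β : ℝ → V` satisfies
`β (t+s) = β t + e^{tN} (β s)` and is bounded along some sequence `t_k → +∞`,
then `β ≡ 0`. -/
theorem curve_cocycle_nilpotent_bounded_eq_zero
    {V : Type*} [NormedAddCommGroup V] [NormedSpace ℝ V] [FiniteDimensional ℝ V]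
    (N : V →L[ℝ] V) (hN : IsNilpotent N)
    (β : ℝ → V) (hβ : Continuous β)
    (hcoc : ∀ t s : ℝ, β (t + s) = β t + exp (t • N) (β s))
    (hbd : ∃ t : ℕ → ℝ, Tendsto t atTop atTop ∧ IsBounded (Set.range fun k => β (t k))) :
    ∀ t : ℝ, β t = 0 := by
  obtain ⟨n, hn⟩ := hN
  have hpow : ∀ j ≤ n, ∀ t, (N ^ j) (β t) = 0 := fun j hj =>
    Nat.decreasingInduction (fun k _ ih => pow_apply_cocycle_eq_zero_of_succ hβ hcoc hbd ih)
      (by simp [hn]) hj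
  simpa using hpow 0 n.zero_le
end

section
/- Let V be a finite-dimensional real normed vector space, N a nilpotent linear endomorphism of V, and x ∈ V. If the set {e^{tN} x : t ≥ 0} is bounded, then N x = 0; equivalently, e^{tN} x = x for all t ∈ ℝ. -/
/-!
For nilpotent `N` the orbit `t ↦ e^{tN} x = ∑ₖ (tᵏ / k!) Nᵏ x` is a polynomial curve. Composed with
any continuous linear functional it becomes a real polynomial bounded on `[0, ∞)`, hence constant;
so all coefficients of positive degree vanish, the first of them being `N x`.
-/

open Bornology NormedSpace

open Filter Finset
open scoped Polynomial Nat

theorem NormedSpace.exp_eq_sum_range_of_pow_eq_zero (𝕂 : Type*) {𝔸 : Type*} [Field 𝕂] [CharZero 𝕂]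
    [Ring 𝔸] [Algebra 𝕂 𝔸] [TopologicalSpace 𝔸] [IsTopologicalRing 𝔸] {a : 𝔸} {n : ℕ}
    (h : a ^ n = 0) : exp a = ∑ k ∈ range n, (k !⁻¹ : 𝕂) • a ^ k := by
  rw [exp_eq_tsum 𝕂]
  exact tsum_eq_sum fun k hk => by
    rw [pow_eq_zero_of_le (by simpa using hk) h, smul_zero]

theorem ContinuousLinearMap.exp_smul_apply_eq_sum_range {𝕜 E : Type*} [NontriviallyNormedField 𝕜]
    [CharZero 𝕜] [NormedAddCommGroup E] [NormedSpace 𝕜 E] {N : E →L[𝕜] E} {n : ℕ}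
    (h : N ^ n = 0) (t : 𝕜) (x : E) :
    exp (t • N) x = ∑ k ∈ range n, t ^ k • (k !⁻¹ : 𝕜) • (N ^ k) x := by
  have htN : (t • N) ^ n = 0 := by rw [_root_.smul_pow, h, smul_zero]
  rw [exp_eq_sum_range_of_pow_eq_zero 𝕜 htN, _root_.sum_apply]
  refine sum_congr rfl fun k _ => ?_
  rw [_root_.smul_pow, smul_apply, smul_apply, smul_comm]

theorem Polynomial.coeff_eq_zero_of_forall_abs_eval_le {p : ℝ[X]} {C : ℝ}
    (hC : ∀ t, 0 ≤ t → |p.eval t| ≤ C) {k : ℕ} (hk : k ≠ 0) : p.coeff k = 0 := by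
  have hdeg : p.degree ≤ 0 :=
    (isBoundedUnder_abs_atTop_iff p).mp ⟨C, eventually_map.mpr <| (eventually_ge_atTop 0).mono hC⟩
  exact coeff_eq_zero_of_degree_lt (hdeg.trans_lt (by exact_mod_cast Nat.pos_of_ne_zero hk))

theorem eq_zero_of_forall_norm_sum_pow_smul_le {E : Type*} [NormedAddCommGroup E]
    [NormedSpace ℝ E] {n : ℕ} {v : ℕ → E} {C : ℝ}
    (hC : ∀ t : ℝ, 0 ≤ t → ‖∑ k ∈ range n, t ^ k • v k‖ ≤ C) {k : ℕ} (hk : k ≠ 0)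
    (hkn : k < n) : v k = 0 := by
  refine SeparatingDual.eq_zero_of_forall_dual_eq_zero (R := ℝ) fun f => ?_
  set p : ℝ[X] := ∑ j ∈ range n, Polynomial.C (f (v j)) * Polynomial.X ^ j
  have heval (t : ℝ) : p.eval t = f (∑ j ∈ range n, t ^ j • v j) := by
    simp only [p, Polynomial.eval_finsetSum, Polynomial.eval_mul, Polynomial.eval_C,
      Polynomial.eval_pow, Polynomial.eval_X, map_sum, map_smul, smul_eq_mul, mul_comm]
  have hcoeff : p.coeff k = f (v k) := by simp [p, hkn]
  rw [← hcoeff]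
  refine Polynomial.coeff_eq_zero_of_forall_abs_eval_le (C := ‖f‖ * C) (fun t ht => ?_) hk
  rw [heval]
  exact (f.le_opNorm _).trans (mul_le_mul_of_nonneg_left (hC t ht) (norm_nonneg f))

theorem nilpotent_bounded_orbit_fixed_general
    {V : Type*} [NormedAddCommGroup V] [NormedSpace ℝ V]
    (N : V →L[ℝ] V) (hN : IsNilpotent N) (x : V)
    (hbd : IsBounded {y : V | ∃ t : ℝ, 0 ≤ t ∧ y = exp (t • N) x}) :
    N x = 0 ∧ ∀ t : ℝ, exp (t • N) x = x := by
  obtain ⟨n, hn⟩ := hN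
  -- `n + 2` rather than `n`, so that the coefficient `N x` of `t` occurs in the sum
  have horbit (t : ℝ) : exp (t • N) x = ∑ k ∈ range (n + 2), t ^ k • (k !⁻¹ : ℝ) • (N ^ k) x :=
    ContinuousLinearMap.exp_smul_apply_eq_sum_range (pow_eq_zero_of_le (by omega) hn) t x
  obtain ⟨C, hC⟩ := isBounded_iff_forall_norm_le.mp hbd
  have hcoeff (k : ℕ) (hk : k ≠ 0) (hkn : k < n + 2) : (k !⁻¹ : ℝ) • (N ^ k) x = 0 :=
    eq_zero_of_forall_norm_sum_pow_smul_le (fun t ht => horbit t ▸ hC _ ⟨t, ht, rfl⟩) hk hkn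
  have hNx : N x = 0 := by simpa using hcoeff 1 one_ne_zero (by omega)
  refine ⟨hNx, fun t => ?_⟩
  rw [horbit, sum_eq_single_of_mem 0 (by simp) fun k hkn hk =>
    by rw [hcoeff k hk (mem_range.mp hkn), smul_zero]]
  simp

/-- Let `V` be a finite-dimensional real normed vector space, `N` a nilpotent
linear endomorphism of `V` and `x ∈ V`.  If the set `{e^{tN} x : t ≥ 0}` is bounded, then
`N x = 0`; equivalently, `e^{tN} x = x` for all `t ∈ ℝ`. -/
theorem nilpotent_bounded_orbit_fixed
    {V : Type*} [NormedAddCommGroup V] [NormedSpace ℝ V] [FiniteDimensional ℝ V]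
    (N : V →L[ℝ] V) (hN : IsNilpotent N) (x : V)
    (hbd : IsBounded {y : V | ∃ t : ℝ, 0 ≤ t ∧ y = exp (t • N) x}) :
    N x = 0 ∧ ∀ t : ℝ, exp (t • N) x = x :=
  nilpotent_bounded_orbit_fixed_general N hN x hbd
end

section
/- Let V be a finite-dimensional real normed vector space and A a linear endomorphism of V with Jordan decomposition A = A_E + A_H + A_N into pairwise commuting elliptic, hyperbolic, and nilpotent parts. Let v ∈ ker A_H. Then the set {e^{tA} v : t ≥ 0} is bounded if and only if A_N v = 0. -/
open Bornology NormedSpace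

/-- A real endomorphism is elliptic if its complexification is diagonalizable and all its
complex eigenvalues are purely imaginary. -/
def LinearMap.IsEllipticReal {V : Type*} [AddCommGroup V] [Module ℝ V]
    (A : V →ₗ[ℝ] V) : Prop :=
  (⨆ μ : ℂ, Module.End.eigenspace (A.baseChange ℂ) μ) = ⊤ ∧
  ∀ μ : ℂ, Module.End.HasEigenvalue (A.baseChange ℂ) μ → μ.re = 0

/-- A real endomorphism is hyperbolic if its complexification is diagonalizable and all its
complex eigenvalues are real. -/
def LinearMap.IsHyperbolicReal {V : Type*} [AddCommGroup V] [Module ℝ V]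
    (A : V →ₗ[ℝ] V) : Prop :=
  (⨆ μ : ℂ, Module.End.eigenspace (A.baseChange ℂ) μ) = ⊤ ∧
  ∀ μ : ℂ, Module.End.HasEigenvalue (A.baseChange ℂ) μ → μ.im = 0

/-!
Since `A_H` commutes with `A_E + A_N` and kills `v`, `e^{tA} v = e^{t A_E} e^{t A_N} v`.
Diagonalising the complexification of `A_E` shows that every orbit of `e^{t A_E}` is bounded, so
by Banach–Steinhaus the operators `e^{t A_E}`, `t ∈ ℝ`, are uniformly bounded and the orbit of `v`
under `e^{tA}` is bounded iff its orbit under `e^{t A_N}` is. If `A_N v ≠ 0`, choose `j` with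
`A_N^{j+1} v ≠ 0 = A_N^{j+2} v`; then `A_N^j e^{t A_N} v = A_N^j v + t A_N^{j+1} v` is an
unbounded ray.
-/

open Set
open scoped Nat
open scoped TensorProduct

section Exp

variable {𝕂 E : Type*} [RCLike 𝕂] [NormedAddCommGroup E] [NormedSpace 𝕂 E] [CompleteSpace E]

theorem ContinuousLinearMap.hasSum_exp_apply (B : E →L[𝕂] E) (x : E) :
    HasSum (fun n => (n !⁻¹ : 𝕂) • (B ^ n) x) (exp B x) := by
  simpa using (exp_series_hasSum_exp' (𝕂 := 𝕂) B).mapL (ContinuousLinearMap.apply 𝕂 E x)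

theorem ContinuousLinearMap.exp_apply_eq_sum_of_pow_apply_eq_zero {B : E →L[𝕂] E} {x : E}
    {k : ℕ} (hk : (B ^ k) x = 0) : exp B x = ∑ n ∈ Finset.range k, (n !⁻¹ : 𝕂) • (B ^ n) x := by
  refine (B.hasSum_exp_apply x).unique (hasSum_sum_of_ne_finset_zero fun n hn => ?_)
  obtain ⟨m, rfl⟩ := Nat.exists_eq_add_of_le (not_lt.mp (Finset.mem_range.not.mp hn))
  rw [add_comm, pow_add, mul_apply_eq_comp, hk, map_zero, smul_zero]

theorem ContinuousLinearMap.exp_apply_of_apply_eq_zero {B : E →L[𝕂] E} {x : E} (hx : B x = 0) :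
    exp B x = x := by
  simpa using B.exp_apply_eq_sum_of_pow_apply_eq_zero (k := 1) (by simpa using hx)

theorem ContinuousLinearMap.exp_apply_of_apply_apply_eq_zero {B : E →L[𝕂] E} {x : E}
    (hx : B (B x) = 0) : exp B x = x + B x := by
  simpa [Finset.sum_range_succ] using
    B.exp_apply_eq_sum_of_pow_apply_eq_zero (k := 2) (by simpa [sq] using hx)

theorem ContinuousLinearMap.exp_add_of_commute {X Y : E →L[𝕂] E} (h : Commute X Y) :
    exp (X + Y) = exp X * exp Y := by
  -- the library states this for normed `ℚ`-algebras, which `E →L[𝕂] E` is not by an instance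
  let : NormedAlgebra ℚ (E →L[𝕂] E) := .restrictScalars ℚ 𝕂 _
  exact NormedSpace.exp_add_of_commute h

end Exp

theorem Bornology.IsBounded.image_apply_of_forall_norm_le {α 𝕜 E F : Type*}
    [NontriviallyNormedField 𝕜] [SeminormedAddCommGroup E] [NormedSpace 𝕜 E]
    [SeminormedAddCommGroup F] [NormedSpace 𝕜 F] {U : α → E →L[𝕜] F} {C : ℝ}
    (hU : ∀ a, ‖U a‖ ≤ C) {g : α → E} {s : Set α} (hg : IsBounded (g '' s)) :
    IsBounded ((fun a => U a (g a)) '' s) := by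
  obtain ⟨R, hR⟩ := isBounded_iff_forall_norm_le.mp hg
  refine isBounded_iff_forall_norm_le.mpr ⟨C * R, ?_⟩
  rintro _ ⟨a, ha, rfl⟩
  calc ‖U a (g a)‖ ≤ C * ‖g a‖ := (U a).le_of_opNorm_le (hU a) _
    _ ≤ C * R := mul_le_mul_of_nonneg_left (hR _ (mem_image_of_mem g ha))
      ((norm_nonneg _).trans (hU a))

theorem not_isBounded_image_Ici_add_smul {E : Type*} [NormedAddCommGroup E] [NormedSpace ℝ E]
    (u : E) {w : E} (hw : w ≠ 0) : ¬ IsBounded ((fun t : ℝ => u + t • w) '' Ici 0) := by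
  intro hb
  obtain ⟨C, hC⟩ := isBounded_iff_forall_norm_le.mp hb
  have hw' : 0 < ‖w‖ := norm_pos_iff.mpr hw
  have hu : ‖u‖ ≤ C := by simpa using hC u ⟨0, self_mem_Ici, by simp⟩
  set t := (C + ‖u‖ + 1) / ‖w‖
  have ht : 0 ≤ t := div_nonneg (by linarith [norm_nonneg u]) hw'.le
  have hray : t * ‖w‖ ≤ C + ‖u‖ :=
    calc t * ‖w‖ = ‖(u + t • w) - u‖ := by simp [norm_smul, abs_of_nonneg ht]
      _ ≤ ‖u + t • w‖ + ‖u‖ := norm_sub_le _ _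
      _ ≤ C + ‖u‖ := add_le_add_left (hC _ (mem_image_of_mem _ ht)) _
  rw [div_mul_cancel₀ _ hw'.ne'] at hray
  linarith

theorem IsNilpotent.exists_pow_succ_apply_ne_zero_and_pow_succ_succ_apply_eq_zero
    {R M : Type*} [Semiring R] [AddCommMonoid M] [Module R M] [TopologicalSpace M]
    {N : M →L[R] M} (hN : IsNilpotent N) {x : M} (hx : N x ≠ 0) :
    ∃ j, (N ^ (j + 1)) x ≠ 0 ∧ (N ^ (j + 2)) x = 0 := by
  by_contra! h
  obtain ⟨k, hk⟩ := hN
  have hne : ∀ j, (N ^ (j + 1)) x ≠ 0 := fun j => Nat.rec (by simpa using hx) h j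
  exact hne k (by rw [_root_.pow_succ, hk, zero_mul, zero_apply])

section Nilpotent

variable {E : Type*} [NormedAddCommGroup E] [NormedSpace ℝ E] [CompleteSpace E]

theorem apply_eq_zero_of_isNilpotent_of_isBounded_exp_smul_image {N : E →L[ℝ] E}
    (hN : IsNilpotent N) {x : E} (hb : IsBounded ((fun t : ℝ => exp (t • N) x) '' Ici 0)) :
    N x = 0 := by
  by_contra hx
  obtain ⟨j, hj, hj2⟩ := hN.exists_pow_succ_apply_ne_zero_and_pow_succ_succ_apply_eq_zero hx
  have hNu : N ((N ^ j) x) ≠ 0 := by simpa only [_root_.pow_succ', mul_apply_eq_comp] using hj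
  have hNNu : N (N ((N ^ j) x)) = 0 := by
    simpa only [_root_.pow_succ', mul_apply_eq_comp] using hj2
  have hline : ∀ t : ℝ, (N ^ j) (exp (t • N) x) = (N ^ j) x + t • N ((N ^ j) x) := fun t => by
    rw [← mul_apply_eq_comp, ((Commute.refl N).smul_right t).pow_left j |>.exp_right.eq,
      mul_apply_eq_comp, ContinuousLinearMap.exp_apply_of_apply_apply_eq_zero
        (by simp only [smul_apply, map_smul, hNNu, smul_zero])]
    rfl
  refine not_isBounded_image_Ici_add_smul ((N ^ j) x) hNu ?_
  simpa only [image_image, hline] using (N ^ j).lipschitz.isBounded_image hb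

end Nilpotent

section Elliptic

variable {V : Type*} [NormedAddCommGroup V] [NormedSpace ℝ V] [FiniteDimensional ℝ V]

theorem apply_one_tmul_exp_smul_apply (B : V →L[ℝ] V) (ℓ : ℂ ⊗[ℝ] V →ₗ[ℂ] ℂ) {x : V}
    {s : Finset ℂ} {w : ℂ → ℂ ⊗[ℝ] V}
    (hw : ∀ μ ∈ s, Module.End.HasEigenvector ((B : V →ₗ[ℝ] V).baseChange ℂ) μ (w μ))
    (hx : 1 ⊗ₜ x = ∑ μ ∈ s, w μ) (t : ℝ) :
    ℓ (1 ⊗ₜ exp (t • B) x) = ∑ μ ∈ s, Complex.exp (t * μ) * ℓ (w μ) := by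
  let L : V →L[ℝ] ℂ := LinearMap.toContinuousLinearMap
    ((ℓ.restrictScalars ℝ) ∘ₗ TensorProduct.mk ℝ ℂ V 1)
  have hpow : ∀ n, (1 : ℂ) ⊗ₜ[ℝ] (B ^ n) x = ∑ μ ∈ s, μ ^ n • w μ := fun n => by
    rw [← ContinuousLinearMap.coe_coe, ContinuousLinearMap.toLinearMap_pow,
      ← LinearMap.baseChange_tmul, LinearMap.baseChange_pow, hx, map_sum]
    exact Finset.sum_congr rfl fun μ hμ => (hw μ hμ).pow_apply n
  have hterm : ∀ n : ℕ, L ((n !⁻¹ : ℝ) • ((t • B) ^ n) x)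
      = ∑ μ ∈ s, (n !⁻¹ : ℂ) • (t * μ) ^ n * ℓ (w μ) := fun n => by
    have hL : ∀ y, L y = ℓ (1 ⊗ₜ y) := fun y => rfl
    rw [smul_pow, smul_apply, smul_smul, map_smul, hL, hpow, map_sum, Finset.smul_sum]
    refine Finset.sum_congr rfl fun μ _ => ?_
    rw [map_smul, Complex.real_smul, smul_eq_mul]
    push_cast
    ring
  refine (((t • B).hasSum_exp_apply x).mapL L).unique ?_
  simp only [hterm, Complex.exp_eq_exp_ℂ]
  exact hasSum_sum fun μ _ => (exp_series_hasSum_exp' (𝕂 := ℂ) (t * μ : ℂ)).mul_right (ℓ (w μ))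

theorem Module.Basis.exists_norm_le_of_forall_exists_norm_repr_le {𝕜 E ι α : Type*}
    [NormedField 𝕜] [SeminormedAddCommGroup E] [NormedSpace 𝕜 E] [Fintype ι]
    (b : Module.Basis ι 𝕜 E) {g : α → E} (h : ∀ i, ∃ C, ∀ a, ‖b.repr (g a) i‖ ≤ C) :
    ∃ C, ∀ a, ‖g a‖ ≤ C := by
  choose C hC using h
  refine ⟨∑ i, C i * ‖b i‖, fun a => ?_⟩
  calc ‖g a‖ = ‖∑ i, b.repr (g a) i • b i‖ := by rw [b.sum_repr]
    _ ≤ ∑ i, ‖b.repr (g a) i • b i‖ := norm_sum_le _ _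
    _ ≤ ∑ i, C i * ‖b i‖ := Finset.sum_le_sum fun i _ =>
      (norm_smul_le _ _).trans (mul_le_mul_of_nonneg_right (hC i a) (norm_nonneg _))

theorem LinearMap.IsEllipticReal.exists_norm_exp_smul_apply_le {B : V →L[ℝ] V}
    (hB : (B : V →ₗ[ℝ] V).IsEllipticReal) (x : V) : ∃ C, ∀ t : ℝ, ‖exp (t • B) x‖ ≤ C := by
  have hx : (1 : ℂ) ⊗ₜ[ℝ] x ∈ ⨆ μ, Module.End.eigenspace ((B : V →ₗ[ℝ] V).baseChange ℂ) μ :=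
    hB.1 ▸ Submodule.mem_top
  obtain ⟨f, hf, hfx⟩ := (Submodule.mem_iSup_iff_exists_finsupp _ _).mp hx
  have hvec : ∀ μ ∈ f.support,
      Module.End.HasEigenvector ((B : V →ₗ[ℝ] V).baseChange ℂ) μ (f μ) :=
    fun μ hμ => ⟨hf μ, Finsupp.mem_support_iff.mp hμ⟩
  let b := Module.finBasis ℝ V
  let bc := Algebra.TensorProduct.basis ℂ b
  refine b.exists_norm_le_of_forall_exists_norm_repr_le fun i =>
    ⟨∑ μ ∈ f.support, ‖bc.coord i (f μ)‖, fun t => ?_⟩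
  have hcoord : ∀ y, (b.repr y i : ℂ) = bc.coord i (1 ⊗ₜ y) := fun y => by simp [bc]
  rw [← Complex.norm_real, hcoord, apply_one_tmul_exp_smul_apply B _ hvec hfx.symm]
  refine (norm_sum_le _ _).trans (Finset.sum_le_sum fun μ hμ => ?_)
  rw [norm_mul, Complex.norm_exp, Complex.re_ofReal_mul,
    hB.2 μ (Module.End.hasEigenvalue_of_hasEigenvector (hvec μ hμ)), mul_zero, Real.exp_zero,
    one_mul]

theorem LinearMap.IsEllipticReal.exists_norm_exp_smul_le {B : V →L[ℝ] V}
    (hB : (B : V →ₗ[ℝ] V).IsEllipticReal) : ∃ C, ∀ t : ℝ, ‖exp (t • B)‖ ≤ C :=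
  banach_steinhaus hB.exists_norm_exp_smul_apply_le

end Elliptic

section Conjugation

variable {E : Type*} [NormedAddCommGroup E] [NormedSpace ℝ E] [CompleteSpace E]

theorem exp_smul_add_apply_of_apply_eq_zero {X H : E →L[ℝ] E} (hXH : Commute X H) {x : E}
    (hx : H x = 0) (t : ℝ) : exp (t • (X + H)) x = exp (t • X) x := by
  rw [smul_add, ContinuousLinearMap.exp_add_of_commute ((hXH.smul_left t).smul_right t),
    mul_apply_eq_comp,
    ContinuousLinearMap.exp_apply_of_apply_eq_zero (B := t • H) (by simp [hx])]

theorem isBounded_exp_smul_add_apply_image_iff {X N : E →L[ℝ] E} (hXN : Commute X N) {C : ℝ}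
    (hX : ∀ t : ℝ, ‖exp (t • X)‖ ≤ C) (x : E) (s : Set ℝ) :
    IsBounded ((fun t => exp (t • (X + N)) x) '' s) ↔
      IsBounded ((fun t => exp (t • N) x) '' s) := by
  have hsplit : ∀ t : ℝ, exp (t • (X + N)) x = exp (t • X) (exp (t • N) x) := fun t => by
    rw [smul_add, ContinuousLinearMap.exp_add_of_commute ((hXN.smul_left t).smul_right t)]
    rfl
  have hinv : ∀ t : ℝ, exp (t • N) x = exp ((-t) • X) (exp (t • (X + N)) x) := fun t => by
    rw [hsplit, ← mul_apply_eq_comp,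
      ← ContinuousLinearMap.exp_add_of_commute (((Commute.refl X).smul_left _).smul_right t),
      ← add_smul, neg_add_cancel, zero_smul, exp_zero]
    rfl
  constructor
  · intro hb
    simpa only [← hinv] using hb.image_apply_of_forall_norm_le fun t => hX (-t)
  · intro hb
    simpa only [← hsplit] using hb.image_apply_of_forall_norm_le hX

end Conjugation

theorem bounded_orbit_iff_nilpotent_part_vanishes_general
    {V : Type*} [NormedAddCommGroup V] [NormedSpace ℝ V] [FiniteDimensional ℝ V]
    (A AE AH AN : V →L[ℝ] V)
    (hsum : A = AE + AH + AN)
    (hEH : Commute AE AH) (hEN : Commute AE AN) (hHN : Commute AH AN)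
    (hE : (AE : V →ₗ[ℝ] V).IsEllipticReal)
    (hN : IsNilpotent AN)
    (v : V) (hv : AH v = 0) :
    IsBounded {y : V | ∃ t : ℝ, 0 ≤ t ∧ y = exp (t • A) v} ↔ AN v = 0 := by
  have hA : ∀ t : ℝ, exp (t • A) v = exp (t • (AE + AN)) v := fun t => by
    rw [show A = AE + AN + AH by rw [hsum]; abel]
    exact exp_smul_add_apply_of_apply_eq_zero (hEH.add_left hHN.symm) hv t
  have horbit : {y : V | ∃ t : ℝ, 0 ≤ t ∧ y = exp (t • A) v}
      = (fun t : ℝ => exp (t • (AE + AN)) v) '' Ici 0 := by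
    ext y
    simp only [mem_ofPred_eq, mem_image, mem_Ici, hA, eq_comm]
  obtain ⟨C, hC⟩ := hE.exists_norm_exp_smul_le
  rw [horbit]
  refine (isBounded_exp_smul_add_apply_image_iff hEN hC v (Ici 0)).trans ?_
  refine ⟨apply_eq_zero_of_isNilpotent_of_isBounded_exp_smul_image hN, fun hAN => ?_⟩
  refine isBounded_singleton (x := v) |>.subset ?_
  rintro _ ⟨t, -, rfl⟩
  exact ContinuousLinearMap.exp_apply_of_apply_eq_zero (by simp [hAN])

/-- Let `A = A_E + A_H + A_N` be the Jordan decomposition of a linear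
endomorphism `A` of a finite-dimensional real normed vector space `V`, into pairwise commuting
elliptic, hyperbolic and nilpotent parts.  For `v ∈ ker A_H`, the set `{e^{tA} v : t ≥ 0}` is
bounded if and only if `A_N v = 0`. -/
theorem bounded_orbit_iff_nilpotent_part_vanishes
    {V : Type*} [NormedAddCommGroup V] [NormedSpace ℝ V] [FiniteDimensional ℝ V]
    (A AE AH AN : V →L[ℝ] V)
    (hsum : A = AE + AH + AN)
    (hEH : Commute AE AH) (hEN : Commute AE AN) (hHN : Commute AH AN)
    (hE : (AE : V →ₗ[ℝ] V).IsEllipticReal)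
    (hH : (AH : V →ₗ[ℝ] V).IsHyperbolicReal)
    (hN : IsNilpotent AN)
    (v : V) (hv : AH v = 0) :
    IsBounded {y : V | ∃ t : ℝ, 0 ≤ t ∧ y = exp (t • A) v} ↔ AN v = 0 :=
  bounded_orbit_iff_nilpotent_part_vanishes_general A AE AH AN hsum hEH hEN hHN hE hN v hv
end

section
/- Let G be a connected finite-dimensional real Lie group and φ a flow of automorphisms on G. Let K be a compact connected subgroup of the center of G such that every compact connected subgroup of the center of G is contained in K (the toral component of G). Then φ_t(k) = k for every t ∈ ℝ and every k ∈ K. -/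
/-!
On the center, the displacement `k ↦ φ_t(k) k⁻¹` is a homomorphism, so the powers of a
displacement are again displacements of elements of `K`. By compactness of `K`, all displacements
are close to `1` for small `t`; a Lie group has no small subgroups (in a chart at `1`, squaring
roughly doubles the distance to `1`), so `φ_t` fixes `K` for small `t`. The times fixing `K`
therefore form an open subgroup of the connected group `ℝ`.
-/

open Set Filter
open scoped Topology

theorem eventually_mul_dist_le_dist_of_hasFDerivWithinAt {E F : Type*}
    [NormedAddCommGroup E] [NormedSpace ℝ E] [NormedAddCommGroup F] [NormedSpace ℝ F]
    {f : E → F} {L : E →L[ℝ] F} {s : Set E} {x : E} (hf : HasFDerivWithinAt f L s x)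
    {c c' : ℝ} (hL : ∀ v, c * ‖v‖ ≤ ‖L v‖) (hc' : c' < c) :
    ∀ᶠ y in 𝓝[s] x, c' * dist y x ≤ dist (f y) (f x) := by
  filter_upwards [hf.isLittleO.def (sub_pos.mpr hc')] with y hy
  rw [dist_eq_norm, dist_eq_norm]
  have htri := norm_sub_norm_le (L (y - x)) (f y - f x)
  rw [norm_sub_rev (L (y - x))] at htri
  linarith [hL (y - x)]

theorem le_zero_of_forall_pow_mem_of_expanding {G : Type*} [Monoid G] {U : Set G} {d : G → ℝ}
    {c δ : ℝ} (hc : 1 < c) (hexp : ∀ g ∈ U, c * d g ≤ d (g * g)) (hbdd : ∀ g ∈ U, d g < δ)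
    {g : G} (hg : ∀ n : ℕ, g ^ n ∈ U) : d g ≤ 0 := by
  have hgrow : ∀ n : ℕ, c ^ n * d g ≤ d (g ^ 2 ^ n) := by
    intro n
    induction n with
    | zero => simp
    | succ n ih =>
      calc c ^ (n + 1) * d g = c * (c ^ n * d g) := by ring
        _ ≤ c * d (g ^ 2 ^ n) := by gcongr
        _ ≤ d (g ^ 2 ^ n * g ^ 2 ^ n) := hexp _ (hg _)
        _ = d (g ^ 2 ^ (n + 1)) := by rw [pow_succ, pow_mul, sq]
  by_contra! hpos
  obtain ⟨n, hn⟩ := pow_unbounded_of_one_lt (δ / d g) hc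
  rw [div_lt_iff₀ hpos] at hn
  linarith [hgrow n, hbdd _ (hg (2 ^ n))]

/-- The NSS property in power form; shrinking `U` to `U ∩ U⁻¹` shows that it is equivalent to
`U` containing no nontrivial subgroup. -/
def HasNoSmallSubgroups (G : Type*) [Group G] [TopologicalSpace G] : Prop :=
  ∃ U ∈ 𝓝 (1 : G), ∀ g : G, (∀ n : ℕ, g ^ n ∈ U) → g = 1

section LieGroup

variable {E : Type*} [NormedAddCommGroup E] [NormedSpace ℝ E] {H : Type*} [TopologicalSpace H]
  (I : ModelWithCorners ℝ E H) {n : WithTop ℕ∞} (G : Type*) [Group G] [TopologicalSpace G]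
  [ChartedSpace H G] [LieGroup I n G]

theorem mfderiv_mul_self_one_apply (hn : n ≠ 0) (v : TangentSpace I (1 : G)) :
    mfderiv I I (fun g : G => g * g) 1 v = v + v := by
  have hmul : MDifferentiableAt (I.prod I) I (fun p : G × G => p.1 * p.2) (1, 1) :=
    (contMDiff_mul I n).mdifferentiableAt hn
  have hdiag : MDifferentiableAt I (I.prod I) (fun g : G => (g, g)) 1 :=
    mdifferentiableAt_id.prodMk mdifferentiableAt_id
  rw [show (fun g : G => g * g) = (fun p : G × G => p.1 * p.2) ∘ (fun g => (g, g)) from rfl,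
    mfderiv_comp_apply (f := fun g : G => (g, g)) 1 hmul hdiag,
    mfderiv_prodMk (f := fun g : G => g) (g := fun g : G => g) mdifferentiableAt_id
      mdifferentiableAt_id,
    mfderiv_prod_eq_add_apply hmul, show (fun z : G => z * 1) = id from funext mul_one,
    show (fun z : G => 1 * z) = id from funext one_mul, mfderiv_id]
  erw [mfderiv_id]
  rfl

include I in
theorem LieGroup.hasNoSmallSubgroups (hn : n ≠ 0) : HasNoSmallSubgroups G := by
  have hsq : MDifferentiableAt I I (fun g : G => g * g) 1 :=
    ((contMDiff_mul I n).comp (contMDiff_id.prodMk contMDiff_id)).mdifferentiableAt hn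
  have hexp := eventually_mul_dist_le_dist_of_hasFDerivWithinAt hsq.hasMFDerivAt.2
    (c := 2) (c' := 3 / 2) (fun v => by
      erw [mfderiv_mul_self_one_apply I G hn v]
      change 2 * ‖v‖ ≤ ‖v + v‖
      rw [← two_smul ℝ v, norm_smul, Real.norm_two]) (by norm_num)
  rw [← map_extChartAt_nhds, eventually_map] at hexp
  set e := extChartAt I (1 : G) with he
  refine ⟨{g | g ∈ e.source ∧ dist (e g) (e 1) < 1 ∧
    3 / 2 * dist (e g) (e 1) ≤ dist (e (g * g)) (e 1)}, ?_, fun g hg => ?_⟩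
  · filter_upwards [extChartAt_source_mem_nhds (I := I) (1 : G),
      continuousAt_extChartAt (I := I) (1 : G) (Metric.ball_mem_nhds _ one_pos), hexp]
      with g hg hball hg'
    refine ⟨hg, hball, ?_⟩
    simpa only [writtenInExtChartAt, Function.comp_apply, mul_one, ← he, e.left_inv hg,
      e.left_inv (mem_extChartAt_source 1)] using hg'
  · have hle := le_zero_of_forall_pow_mem_of_expanding (by norm_num : (1 : ℝ) < 3 / 2)
      (fun g hg => hg.2.2) (fun g hg => hg.2.1) hg
    have h1 : g ∈ e.source := by simpa using (hg 1).1
    exact e.injOn h1 (mem_extChartAt_source 1) (dist_le_zero.mp hle)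

end LieGroup

theorem MonoidHom.apply_mul_inv_pow_of_mem_center {G : Type*} [Group G] (f : G →* G) {k : G}
    (hk : k ∈ Subgroup.center G) (n : ℕ) : (f k * k⁻¹) ^ n = f (k ^ n) * (k ^ n)⁻¹ := by
  have hcomm : Commute (f k) k⁻¹ := Subgroup.mem_center_iff.mp (inv_mem hk) (f k)
  rw [hcomm.mul_pow, map_pow, inv_pow]

theorem Flow.apply_eq_self_of_eventually {τ α : Type*} [AddGroup τ] [TopologicalSpace τ]
    [ContinuousAdd τ] [ConnectedSpace τ] [TopologicalSpace α] (ϕ : Flow τ α) {s : Set α}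
    (h : ∀ᶠ t in 𝓝 0, ∀ x ∈ s, ϕ t x = x) (t : τ) {x : α} (hx : x ∈ s) : ϕ t x = x := by
  let S : AddSubgroup τ :=
    { carrier := {t | ∀ x ∈ s, ϕ t x = x}
      add_mem' := fun ha hb x hx => by rw [ϕ.map_add, hb x hx, ha x hx]
      zero_mem' := fun x _ => ϕ.map_zero_apply x
      neg_mem' := fun {a} ha x hx => by
        rw [← congrArg (ϕ (-a)) (ha x hx), ← ϕ.map_add, neg_add_cancel, ϕ.map_zero_apply] }
  have hopen : IsOpen (S : Set τ) := S.isOpen_of_mem_nhds h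
  have huniv : (S : Set τ) = univ :=
    IsClopen.eq_univ ⟨S.isClosed_of_isOpen hopen, hopen⟩ ⟨0, S.zero_mem⟩
  have ht : t ∈ (S : Set τ) := huniv ▸ mem_univ t
  exact ht x hx

theorem Flow.apply_eq_self_of_le_center_of_isCompact {τ G : Type*} [AddGroup τ]
    [TopologicalSpace τ] [ContinuousAdd τ] [ConnectedSpace τ] [Group G] [TopologicalSpace G]
    [IsTopologicalGroup G] (hG : HasNoSmallSubgroups G) (ϕ : Flow τ G)
    (hmul : ∀ t x y, ϕ t (x * y) = ϕ t x * ϕ t y) {K : Subgroup G}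
    (hKcenter : K ≤ Subgroup.center G) (hK : IsCompact (K : Set G)) (t : τ) {k : G}
    (hk : k ∈ K) : ϕ t k = k := by
  obtain ⟨U, hU, hUpow⟩ := hG
  have hdisp : Continuous fun z : τ × G => ϕ z.1 z.2 * z.2⁻¹ :=
    (ϕ.continuous continuous_fst continuous_snd).mul continuous_snd.inv
  have hsmall : ∀ᶠ t in 𝓝 0, ∀ k ∈ K, ϕ t k * k⁻¹ ∈ U :=
    hK.eventually_forall_of_forall_eventually fun k _ =>
      hdisp.continuousAt.preimage_mem_nhds (by simpa [ϕ.map_zero_apply] using hU)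
  refine ϕ.apply_eq_self_of_eventually ?_ t hk
  filter_upwards [hsmall] with t ht k hk
  refine mul_inv_eq_one.mp (hUpow _ fun n => ?_)
  have hpow := (MonoidHom.mk' (ϕ t) (hmul t)).apply_mul_inv_pow_of_mem_center (hKcenter hk) n
  rw [MonoidHom.mk'_apply] at hpow
  exact hpow ▸ ht _ (pow_mem hk n)

theorem flow_fixes_toral_component_general
    {E : Type*} [NormedAddCommGroup E] [NormedSpace ℝ E]
    {H : Type*} [TopologicalSpace H] (I : ModelWithCorners ℝ E H)
    (G : Type*) [Group G] [TopologicalSpace G] [ChartedSpace H G]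
    [LieGroup I (⊤ : ℕ∞) G]
    (φ : ℝ → G → G)
    (hcont : Continuous fun p : ℝ × G => φ p.1 p.2)
    (h0 : φ 0 = id)
    (hflow : ∀ t s : ℝ, φ (t + s) = φ t ∘ φ s)
    (hmul : ∀ (t : ℝ) (x y : G), φ t (x * y) = φ t x * φ t y)
    (K : Subgroup G)
    (hKcenter : K ≤ Subgroup.center G)
    (hKcompact : IsCompact (K : Set G)) :
    ∀ t : ℝ, ∀ k ∈ K, φ t k = k := by
  have : IsTopologicalGroup G := topologicalGroup_of_lieGroup I (⊤ : ℕ∞)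
  let ϕ : Flow ℝ G :=
    { toFun := φ
      cont' := hcont
      map_add' := fun t s x => congrFun (hflow t s) x
      map_zero' := fun x => congrFun h0 x }
  intro t k hk
  have hG : HasNoSmallSubgroups G := LieGroup.hasNoSmallSubgroups I G (n := (⊤ : ℕ∞)) (by simp)
  exact ϕ.apply_eq_self_of_le_center_of_isCompact hG hmul hKcenter hKcompact t hk

/-- Let `G` be a connected finite-dimensional real Lie group and `φ` a flow of
automorphisms on `G`.  Let `K` be a compact connected subgroup of the center of `G` containing
every compact connected subgroup of the center (the toral component of `G`).  Then
`φ_t(k) = k` for every `t ∈ ℝ` and every `k ∈ K`. -/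
theorem flow_fixes_toral_component
    {E : Type*} [NormedAddCommGroup E] [NormedSpace ℝ E] [FiniteDimensional ℝ E]
    {H : Type*} [TopologicalSpace H] (I : ModelWithCorners ℝ E H)
    (G : Type*) [Group G] [TopologicalSpace G] [ChartedSpace H G]
    [LieGroup I (⊤ : ℕ∞) G] [T2Space G] [ConnectedSpace G]
    (φ : ℝ → G → G)
    (hcont : Continuous fun p : ℝ × G => φ p.1 p.2)
    (h0 : φ 0 = id)
    (hflow : ∀ t s : ℝ, φ (t + s) = φ t ∘ φ s)
    (hmul : ∀ (t : ℝ) (x y : G), φ t (x * y) = φ t x * φ t y)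
    (hbij : ∀ t : ℝ, Function.Bijective (φ t))
    (K : Subgroup G)
    (hKcenter : K ≤ Subgroup.center G)
    (hKcompact : IsCompact (K : Set G))
    (hKconnected : IsConnected (K : Set G))
    (hKmax : ∀ K' : Subgroup G, K' ≤ Subgroup.center G → IsCompact (K' : Set G) →
      IsConnected (K' : Set G) → K' ≤ K) :
    ∀ t : ℝ, ∀ k ∈ K, φ t k = k :=
  flow_fixes_toral_component_general I G φ hcont h0 hflow hmul K hKcenter hKcompact
end

section
/- Let G be a Hausdorff topological group and g ∈ G. If the closure H of the set {g^n : n ≥ 1} is compact, then H is a subgroup of G; in particular, the identity element and g^{-1} belong to H. -/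
/-!
The closure `H` of the positive powers of `g` is a compact subsemigroup, so it contains an
idempotent (Ellis–Numakura), and the only idempotent of a group is `1`. Applied to the compact
subsemigroup `g • H`, the closure of the powers `gⁿ` with `n ≥ 2`, this gives `1 ∈ g • H`, i.e.
`g⁻¹ ∈ H`. A closed submonoid containing `g` and `g⁻¹` contains the closure of `⟨g⟩`.
-/

open Set Pointwise

def Subsemigroup.powersFrom {M : Type*} [Monoid M] (g : M) (k : ℕ) : Subsemigroup M where
  carrier := {x | ∃ n : ℕ, k ≤ n ∧ x = g ^ n}
  mul_mem' := by
    rintro _ _ ⟨m, hm, rfl⟩ ⟨n, -, rfl⟩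
    exact ⟨m + n, by omega, (pow_add g m n).symm⟩

namespace Subsemigroup

section Monoid

variable {M : Type*} [Monoid M]

theorem pow_mem_powersFrom (g : M) (k : ℕ) : g ^ k ∈ powersFrom g k :=
  ⟨k, le_rfl, rfl⟩

theorem powersFrom_succ_le (g : M) (k : ℕ) : powersFrom g (k + 1) ≤ powersFrom g k := by
  rintro _ ⟨n, hn, rfl⟩
  exact ⟨n, by omega, rfl⟩

end Monoid

section Group

variable {G : Type*} [Group G]

theorem smul_powersFrom (g : G) (k : ℕ) :
    g • (powersFrom g k : Set G) = powersFrom g (k + 1) := by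
  ext x
  constructor
  · rintro ⟨_, ⟨n, hn, rfl⟩, rfl⟩
    exact ⟨n + 1, by omega, (pow_succ' g n).symm⟩
  · rintro ⟨_ | n, hn, rfl⟩
    · omega
    · exact ⟨g ^ n, ⟨n, by omega, rfl⟩, (pow_succ' g n).symm⟩

theorem powersFrom_le_zpowers (g : G) (k : ℕ) :
    (powersFrom g k : Set G) ⊆ Subgroup.zpowers g := by
  rintro _ ⟨n, -, rfl⟩
  exact Subgroup.npow_mem_zpowers g n

variable [TopologicalSpace G] [ContinuousMul G] [T2Space G]

theorem one_mem_of_isCompact (S : Subsemigroup G) (hne : (S : Set G).Nonempty)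
    (hS : IsCompact (S : Set G)) : (1 : G) ∈ S := by
  obtain ⟨e, heS, hee⟩ := exists_idempotent_in_compact_subsemigroup
    continuous_mul_const (S : Set G) hne hS fun _ hx _ hy => S.mul_mem hx hy
  rwa [mul_eq_right.mp hee] at heS

end Group

end Subsemigroup

open Subsemigroup (powersFrom pow_mem_powersFrom powersFrom_succ_le smul_powersFrom
  powersFrom_le_zpowers)

section TopologicalGroup

variable {G : Type*} [Group G] [TopologicalSpace G] [T2Space G]

theorem one_mem_closure_powersFrom [ContinuousMul G] {g : G} {k : ℕ}
    (h : IsCompact (closure (powersFrom g k : Set G))) :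
    (1 : G) ∈ closure (powersFrom g k : Set G) :=
  (powersFrom g k).topologicalClosure.one_mem_of_isCompact
    ⟨g ^ k, subset_closure (pow_mem_powersFrom g k)⟩ h

theorem inv_mem_closure_powersFrom [IsTopologicalGroup G] {g : G} {k : ℕ}
    (h : IsCompact (closure (powersFrom g k : Set G))) :
    g⁻¹ ∈ closure (powersFrom g k : Set G) := by
  have hsub : closure (powersFrom g (k + 1) : Set G) ⊆ closure (powersFrom g k : Set G) :=
    closure_mono (powersFrom_succ_le g k)
  have hone : (1 : G) ∈ closure (powersFrom g (k + 1) : Set G) :=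
    one_mem_closure_powersFrom (h.of_isClosed_subset isClosed_closure hsub)
  rw [← smul_powersFrom, closure_smul, mem_smul_set_iff_inv_smul_mem, smul_eq_mul,
    mul_one] at hone
  exact hone

theorem closure_powersFrom_one_eq_topologicalClosure_zpowers [IsTopologicalGroup G] {g : G}
    (h : IsCompact (closure (powersFrom g 1 : Set G))) :
    closure (powersFrom g 1 : Set G) = (Subgroup.zpowers g).topologicalClosure := by
  let H : Submonoid G :=
    { (powersFrom g 1).topologicalClosure with one_mem' := one_mem_closure_powersFrom h }
  have hzpowers : (Subgroup.zpowers g).toSubmonoid ≤ H := by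
    rw [Subgroup.toSubmonoid_zpowers]
    exact sup_le (Submonoid.powers_le.mpr (subset_closure (by simpa using pow_mem_powersFrom g 1)))
      (Submonoid.powers_le.mpr (inv_mem_closure_powersFrom h))
  exact (closure_mono (powersFrom_le_zpowers g 1)).antisymm
    (closure_minimal hzpowers isClosed_closure)

end TopologicalGroup

/-- Let `G` be a Hausdorff topological group and `g ∈ G`.  If the closure `H`
of `{gⁿ : n ≥ 1}` is compact, then `H` is a subgroup of `G`; in particular the identity and
`g⁻¹` belong to `H`. -/
theorem closure_of_powers_is_subgroup
    {G : Type*} [Group G] [TopologicalSpace G] [IsTopologicalGroup G] [T2Space G]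
    (g : G)
    (h : IsCompact (closure {x : G | ∃ n : ℕ, 1 ≤ n ∧ x = g ^ n})) :
    (∃ S : Subgroup G, (S : Set G) = closure {x : G | ∃ n : ℕ, 1 ≤ n ∧ x = g ^ n}) ∧
    (1 : G) ∈ closure {x : G | ∃ n : ℕ, 1 ≤ n ∧ x = g ^ n} ∧
    g⁻¹ ∈ closure {x : G | ∃ n : ℕ, 1 ≤ n ∧ x = g ^ n} := by
  change IsCompact (closure (powersFrom g 1 : Set G)) at h
  exact ⟨⟨_, (closure_powersFrom_one_eq_topologicalClosure_zpowers h).symm⟩,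
    one_mem_closure_powersFrom h, inv_mem_closure_powersFrom h⟩
end
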